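/- arXiv:2309.11292 — 2 statements merged into one kernel-verified Lean document; each statement's English description precedes it below -/
import Mathlib

section
/- For every q ≥ 1, every 𝐧 ∈ ℕ^q_* and every θ > 0 (indeed as a polynomial identity in θ): ∑_{A ⊨ 𝐧} θ^{‖A‖} M_𝐧(A) = (θ)_{|𝐧|}, where the sum runs over all q-colored partitions A of 𝐧. -/
open Finset Nat
open scoped Classical

/-- `col(A) = ∑_𝐚 A(𝐚) • 𝐚`, the color count vector of a colored partition. -/
def colA {q : ℕ} (A : (Fin q → ℕ) →₀ ℕ) : Fin q → ℕ :=
  fun j => ∑ a ∈ A.support, A a * a j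

/-- `‖A‖ = ∑_𝐚 A(𝐚)`, the number of parts of a colored partition. -/
def asize {q : ℕ} (A : (Fin q → ℕ) →₀ ℕ) : ℕ := ∑ a ∈ A.support, A a

/-- The set of `q`-colored partitions of `𝐧`. -/
def CPartSet {q : ℕ} (n : Fin q → ℕ) : Set ((Fin q → ℕ) →₀ ℕ) :=
  {A | A 0 = 0 ∧ colA A = n}

/-- The multinomial coefficient `M_𝐧(A)` of a colored partition `A ⊨ 𝐧`. -/
noncomputable def Mcoef {q : ℕ} (n : Fin q → ℕ) (A : (Fin q → ℕ) →₀ ℕ) : ℝ :=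
  (∏ j, (n j)! : ℝ) *
    ∏ a ∈ A.support,
      ((Nat.multinomial Finset.univ a : ℝ) ^ A a / ((∑ j, a j : ℝ) ^ A a * (A a)!))

/-! Write `M_𝐧(A) = 𝐧! ∏_𝐚 κ(𝐚)^{A(𝐚)} / A(𝐚)!` with `κ(𝐚) = multinomial(𝐚) / |𝐚|`, and let
`Z(𝐧)` be the sum of `θ^{‖A‖} ∏_𝐚 κ(𝐚)^{A(𝐚)} / A(𝐚)!` over `A ⊨ 𝐧`. Removing one part `𝐚` is a
bijection onto the partitions of `𝐧 - 𝐚`, so the parts of type `𝐚`, counted with multiplicity,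
contribute `θ κ(𝐚) Z(𝐧 - 𝐚)`. Counting parts weighted by their `j`-th coordinate, resp. by their
size, gives `n_j Z(𝐧) = θ ∑_𝐚 a_j κ(𝐚) Z(𝐧 - 𝐚)` and
`|𝐧| Z(𝐧) = θ ∑_{𝐚 ≠ 0} multinomial(𝐚) Z(𝐧 - 𝐚)`.
Since `(b_j + 1) κ(𝐛 + 𝐞_j) = multinomial(𝐛)`, comparing the first identity at `𝐧 + 𝐞_j` with the
second at `𝐧` gives `(n_j + 1) Z(𝐧 + 𝐞_j) = (θ + |𝐧|) Z(𝐧)`: the recursion of `(θ)_{|𝐧|} / 𝐧!`. -/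

section General

variable {α : Type*}

noncomputable def expWeight (κ : α → ℝ) (A : α →₀ ℕ) : ℝ :=
  A.prod fun a m => κ a ^ m / m !

lemma succ_mul_pow_div_factorial (x : ℝ) (m : ℕ) :
    ((m : ℝ) + 1) * (x ^ (m + 1) / (m + 1)!) = x * (x ^ m / m !) := by
  rw [Nat.factorial_succ, pow_succ]
  push_cast
  field_simp

lemma expWeight_add_single (κ : α → ℝ) (C : α →₀ ℕ) (a : α) :
    ((C a : ℝ) + 1) * expWeight κ (C + Finsupp.single a 1) = κ a * expWeight κ C := by
  set s := insert a C.support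
  have hC : C.support ⊆ s := subset_insert _ _
  have hCa : (C + Finsupp.single a 1).support ⊆ s :=
    Finsupp.support_add.trans (union_subset hC (by simp [s]))
  have ha : a ∈ s := mem_insert_self _ _
  have hrest : ∀ x ∈ s.erase a, (C + Finsupp.single a 1 : α →₀ ℕ) x = C x := fun x hx => by
    simp [(ne_of_mem_erase hx).symm]
  simp only [expWeight]
  rw [Finsupp.prod_of_support_subset _ hCa _ (by simp),
    Finsupp.prod_of_support_subset _ hC _ (by simp), ← mul_prod_erase _ _ ha,
    ← mul_prod_erase _ _ ha, prod_congr rfl fun x hx => by rw [hrest x hx]]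
  simp only [Finsupp.add_apply, Finsupp.single_eq_same]
  rw [← mul_assoc, succ_mul_pow_div_factorial, mul_assoc]

lemma single_one_le_iff {ι : Type*} [DecidableEq ι] {a : ι → ℕ} {j : ι} :
    Pi.single j 1 ≤ a ↔ a j ≠ 0 := by
  refine ⟨fun h => Nat.one_le_iff_ne_zero.1 (by simpa using h j), fun h i => ?_⟩
  obtain rfl | hi := eq_or_ne i j
  · simpa using Nat.one_le_iff_ne_zero.2 h
  · simp [Pi.single_eq_of_ne hi]

end General

section ColoredPartitions

variable {q : ℕ}

lemma colA_eq_linearCombination (A : (Fin q → ℕ) →₀ ℕ) :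
    colA A = Finsupp.linearCombination ℕ id A := by
  ext j
  simp [colA, Finsupp.linearCombination_apply, Finsupp.sum, Finset.sum_apply]

lemma asize_eq_degree (A : (Fin q → ℕ) →₀ ℕ) : asize A = A.degree := rfl

lemma asize_add_single (C : (Fin q → ℕ) →₀ ℕ) (a : Fin q → ℕ) :
    asize (C + Finsupp.single a 1) = asize C + 1 := by
  simp [asize_eq_degree]

lemma add_single_mem_CPartSet_iff {n a : Fin q → ℕ} (ha : a ≠ 0) (han : a ≤ n)
    (C : (Fin q → ℕ) →₀ ℕ) :
    C + Finsupp.single a 1 ∈ CPartSet n ↔ C ∈ CPartSet (n - a) := by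
  simp [CPartSet, colA_eq_linearCombination, Finsupp.single_eq_of_ne ha.symm,
    eq_tsub_iff_add_eq_of_le han]

lemma apply_mul_le {n : Fin q → ℕ} {A : (Fin q → ℕ) →₀ ℕ} (hA : A ∈ CPartSet n)
    (a : Fin q → ℕ) (i : Fin q) : A a * a i ≤ n i := by
  by_cases ha : a ∈ A.support
  · rw [← hA.2]
    exact single_le_sum (f := fun b => A b * b i) (fun _ _ => Nat.zero_le _) ha
  · simp [Finsupp.notMem_support_iff.mp ha]

lemma support_subset_Iic {n : Fin q → ℕ} {A : (Fin q → ℕ) →₀ ℕ} (hA : A ∈ CPartSet n) :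
    A.support ⊆ Iic n := fun a ha => mem_Iic.2 fun i =>
  (Nat.le_mul_of_pos_left _ (Nat.pos_of_ne_zero (Finsupp.mem_support_iff.mp ha))).trans
    (apply_mul_le hA a i)

lemma apply_le_sum {n : Fin q → ℕ} {A : (Fin q → ℕ) →₀ ℕ} (hA : A ∈ CPartSet n)
    (a : Fin q → ℕ) : A a ≤ ∑ i, n i := by
  obtain rfl | ⟨i, hi⟩ := eq_or_ne a 0 |>.imp_right Function.ne_iff.mp
  · simp [hA.1]
  · calc A a ≤ A a * a i := Nat.le_mul_of_pos_right _ (Nat.pos_of_ne_zero hi)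
      _ ≤ n i := apply_mul_le hA a i
      _ ≤ ∑ i, n i := single_le_sum (fun _ _ => Nat.zero_le _) (mem_univ i)

lemma CPartSet_finite (n : Fin q → ℕ) : (CPartSet n).Finite :=
  ((Iic n).finsupp fun _ => Iic (∑ i, n i)).finite_toSet.subset fun _ hA =>
    mem_finsupp_iff.2 ⟨support_subset_Iic hA, fun a _ => mem_Iic.2 (apply_le_sum hA a)⟩

lemma CPartSet_zero : CPartSet (0 : Fin q → ℕ) = {0} := by
  refine Set.eq_singleton_iff_unique_mem.2
    ⟨⟨rfl, by rw [colA_eq_linearCombination, map_zero]⟩, fun A hA => ?_⟩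
  ext a
  by_contra h
  have ha : a ≤ 0 := mem_Iic.1 (support_subset_Iic hA (Finsupp.mem_support_iff.2 h))
  obtain rfl : a = 0 := nonpos_iff_eq_zero.1 ha
  exact h hA.1

noncomputable def cPartFinset (n : Fin q → ℕ) : Finset ((Fin q → ℕ) →₀ ℕ) :=
  (CPartSet_finite n).toFinset

lemma mem_cPartFinset {n : Fin q → ℕ} {A : (Fin q → ℕ) →₀ ℕ} : A ∈ cPartFinset n ↔ A ∈ CPartSet n :=
  Set.Finite.mem_toFinset _

lemma cPartFinset_zero : cPartFinset (0 : Fin q → ℕ) = {0} := by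
  ext A
  rw [mem_cPartFinset, CPartSet_zero, Set.mem_singleton_iff, mem_singleton]

lemma sum_apply_mul_eq {n : Fin q → ℕ} {A : (Fin q → ℕ) →₀ ℕ} (hA : A ∈ CPartSet n)
    (i : Fin q) : ∑ a ∈ Iic n, (A a : ℝ) * a i = n i := by
  rw [← sum_subset (support_subset_Iic hA) fun a _ ha => by simp [Finsupp.notMem_support_iff.mp ha],
    ← hA.2]
  push_cast [colA]
  rfl

end ColoredPartitions

section PartitionSum

variable {q : ℕ}

noncomputable def partCoef (a : Fin q → ℕ) : ℝ :=
  (Nat.multinomial univ a : ℝ) / ∑ i, (a i : ℝ)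

lemma Mcoef_eq (n : Fin q → ℕ) (A : (Fin q → ℕ) →₀ ℕ) :
    Mcoef n A = (∏ j, ((n j)! : ℝ)) * expWeight partCoef A := by
  simp only [Mcoef, expWeight, Finsupp.prod, partCoef, div_pow, div_div]

lemma sum_mul_partCoef {a : Fin q → ℕ} (ha : a ≠ 0) :
    (∑ i, (a i : ℝ)) * partCoef a = Nat.multinomial univ a := by
  have : (∑ i, (a i : ℝ)) ≠ 0 := by
    exact_mod_cast fun h => ha (funext fun i => sum_eq_zero_iff.1 h i (mem_univ i))
  rw [partCoef, mul_div_cancel₀ _ this]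

lemma multinomial_univ_zero : (Nat.multinomial univ (0 : Fin q → ℕ) : ℝ) = 1 := by
  simp [Nat.multinomial]

lemma sum_add_single (b : Fin q → ℕ) (j : Fin q) :
    ∑ i, (b + Pi.single j 1 : Fin q → ℕ) i = ∑ i, b i + 1 := by
  simp [sum_add_distrib, Pi.single_apply]

lemma prod_factorial_add_single (b : Fin q → ℕ) (j : Fin q) :
    ∏ i, ((b + Pi.single j 1 : Fin q → ℕ) i)! = (b j + 1) * ∏ i, (b i)! := by
  have hrest : ∀ i ∈ univ.erase j, ((b + Pi.single j 1 : Fin q → ℕ) i)! = (b i)! := fun i hi => by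
    simp [Pi.single_eq_of_ne (ne_of_mem_erase hi)]
  rw [← mul_prod_erase _ _ (mem_univ j), ← mul_prod_erase _ (fun i => (b i)!) (mem_univ j),
    prod_congr rfl hrest]
  simp [Nat.factorial_succ, mul_assoc]

lemma succ_mul_multinomial_add_single (b : Fin q → ℕ) (j : Fin q) :
    (b j + 1) * Nat.multinomial univ (b + Pi.single j 1) =
      (∑ i, b i + 1) * Nat.multinomial univ b := by
  have hspec := Nat.multinomial_spec univ (b + Pi.single j 1)
  rw [prod_factorial_add_single, sum_add_single, Nat.factorial_succ,
    ← Nat.multinomial_spec univ b] at hspec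
  exact Nat.eq_of_mul_eq_mul_left (prod_pos fun i _ => Nat.factorial_pos (b i)) (by linarith)

lemma succ_mul_partCoef_add_single (b : Fin q → ℕ) (j : Fin q) :
    ((b j : ℝ) + 1) * partCoef (b + Pi.single j 1) = Nat.multinomial univ b := by
  have hsum : ∑ i, ((b + Pi.single j 1 : Fin q → ℕ) i : ℝ) = ∑ i, (b i : ℝ) + 1 := by
    exact_mod_cast sum_add_single b j
  rw [partCoef, hsum, mul_div_assoc', div_eq_iff (by positivity), mul_comm _ (_ + 1)]
  exact_mod_cast succ_mul_multinomial_add_single b j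

variable (θ : ℝ)

noncomputable def partSum (n : Fin q → ℕ) : ℝ :=
  ∑ A ∈ cPartFinset n, θ ^ asize A * expWeight partCoef A

lemma sum_apply_mul_partSum {n a : Fin q → ℕ} (ha : a ≠ 0) (han : a ≤ n) :
    ∑ A ∈ cPartFinset n, (A a : ℝ) * (θ ^ asize A * expWeight partCoef A) =
      θ * partCoef a * partSum θ (n - a) := by
  rw [partSum, mul_sum]
  symm
  refine sum_of_injOn (· + Finsupp.single a 1) (add_left_injective _).injOn
    (fun C hC => mem_cPartFinset.2
      ((add_single_mem_CPartSet_iff ha han C).2 (mem_cPartFinset.1 hC)))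
    (fun A hA hA' => ?_) (fun C _ => ?_)
  · suffices A a = 0 by simp [this]
    by_contra hAa
    have hle : Finsupp.single a 1 ≤ A := Finsupp.single_le_iff.2 (Nat.one_le_iff_ne_zero.2 hAa)
    refine hA' ⟨A - Finsupp.single a 1, ?_, tsub_add_cancel_of_le hle⟩
    rw [Finset.mem_coe, mem_cPartFinset, ← add_single_mem_CPartSet_iff ha han,
      tsub_add_cancel_of_le hle]
    exact mem_cPartFinset.1 hA
  · simp only [Finsupp.add_apply, Finsupp.single_eq_same, asize_add_single]
    push_cast
    linear_combination (-θ * θ ^ asize C) * expWeight_add_single partCoef C a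

lemma sum_sum_apply_mul_mul (n : Fin q → ℕ) (f : (Fin q → ℕ) → ℝ) :
    ∑ A ∈ cPartFinset n, (∑ a ∈ Iic n, (A a : ℝ) * f a) * (θ ^ asize A * expWeight partCoef A) =
      θ * ∑ a ∈ (Iic n).erase 0, f a * partCoef a * partSum θ (n - a) := by
  simp_rw [sum_mul]
  rw [sum_comm, ← add_sum_erase _ _ (by simp : (0 : Fin q → ℕ) ∈ Iic n), mul_sum]
  have hzero : ∑ A ∈ cPartFinset n, (A 0 : ℝ) * f 0 * (θ ^ asize A * expWeight partCoef A) = 0 :=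
    sum_eq_zero fun A hA => by simp [(mem_cPartFinset.1 hA).1]
  rw [hzero, zero_add]
  refine sum_congr rfl fun a ha => ?_
  simp_rw [mul_comm _ (f a), mul_assoc, ← mul_sum]
  rw [sum_apply_mul_partSum θ (ne_of_mem_erase ha) (mem_Iic.1 (mem_of_mem_erase ha))]
  ring

lemma apply_mul_partSum (n : Fin q → ℕ) (j : Fin q) :
    (n j : ℝ) * partSum θ n =
      θ * ∑ a ∈ (Iic n).erase 0, (a j : ℝ) * partCoef a * partSum θ (n - a) := by
  rw [← sum_sum_apply_mul_mul, partSum, mul_sum]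
  exact sum_congr rfl fun A hA => by rw [sum_apply_mul_eq (mem_cPartFinset.1 hA)]

lemma sum_mul_partSum (n : Fin q → ℕ) :
    (∑ i, (n i : ℝ)) * partSum θ n =
      θ * ∑ a ∈ (Iic n).erase 0, (Nat.multinomial univ a : ℝ) * partSum θ (n - a) := by
  have hcount : ∀ A ∈ cPartFinset n, ∑ a ∈ Iic n, (A a : ℝ) * ∑ i, (a i : ℝ) = ∑ i, (n i : ℝ) :=
    fun A hA => by
      simp_rw [mul_sum]
      rw [sum_comm]
      exact sum_congr rfl fun i _ => sum_apply_mul_eq (mem_cPartFinset.1 hA) i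
  rw [partSum, mul_sum, ← sum_congr rfl fun A hA => congrArg (· * _) (hcount A hA),
    sum_sum_apply_mul_mul]
  exact congrArg _ (sum_congr rfl fun a ha => by rw [sum_mul_partCoef (ne_of_mem_erase ha)])

lemma succ_mul_partSum_add_single (n : Fin q → ℕ) (j : Fin q) :
    ((n j : ℝ) + 1) * partSum θ (n + Pi.single j 1) = (θ + ∑ i, (n i : ℝ)) * partSum θ n := by
  have hreindex : ∑ a ∈ Iic (n + Pi.single j 1),
        (a j : ℝ) * partCoef a * partSum θ (n + Pi.single j 1 - a) =
      ∑ b ∈ Iic n, (Nat.multinomial univ b : ℝ) * partSum θ (n - b) := by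
    symm
    refine sum_of_injOn (· + Pi.single j 1) (add_left_injective _).injOn
      (fun b hb => mem_Iic.2 (add_le_add_left (mem_Iic.1 hb) _)) (fun a ha ha' => ?_)
      (fun b _ => ?_)
    · suffices a j = 0 by simp [this]
      by_contra haj
      have hle : Pi.single j 1 ≤ a := single_one_le_iff.2 haj
      refine ha' ⟨a - Pi.single j 1, ?_, tsub_add_cancel_of_le hle⟩
      rw [Finset.mem_coe, mem_Iic, tsub_le_iff_right]
      exact mem_Iic.1 ha
    · simp only [Pi.add_apply, Pi.single_eq_same, add_tsub_add_eq_tsub_right]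
      push_cast
      rw [succ_mul_partCoef_add_single]
  have hmain := apply_mul_partSum θ (n + Pi.single j 1) j
  rw [sum_erase _ (by simp), hreindex, ← add_sum_erase _ _ (by simp : (0 : Fin q → ℕ) ∈ Iic n),
    mul_add, ← sum_mul_partSum] at hmain
  simp only [Pi.add_apply, Pi.single_eq_same, tsub_zero] at hmain
  push_cast at hmain
  linear_combination hmain + θ * partSum θ n * (multinomial_univ_zero (q := q))

lemma factorial_mul_partSum (n : Fin q → ℕ) :
    (∏ i, ((n i)! : ℝ)) * partSum θ n = (ascPochhammer ℝ (∑ i, n i)).eval θ := by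
  induction hN : ∑ i, n i generalizing n with
  | zero =>
    obtain rfl : n = 0 := funext fun i => sum_eq_zero_iff.1 hN i (mem_univ i)
    simp [partSum, cPartFinset_zero, asize_eq_degree, expWeight]
  | succ N ih =>
    obtain ⟨j, hj⟩ : ∃ j, n j ≠ 0 := by
      by_contra! h0
      simp [h0] at hN
    obtain ⟨m, rfl⟩ : ∃ m, n = m + Pi.single j 1 :=
      ⟨n - Pi.single j 1, (tsub_add_cancel_of_le (single_one_le_iff.2 hj)).symm⟩
    have hm : ∑ i, m i = N := by rw [sum_add_single] at hN; omega
    have hfact : ∏ i, (((m + Pi.single j 1 : Fin q → ℕ) i)! : ℝ) =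
        ((m j : ℝ) + 1) * ∏ i, ((m i)! : ℝ) := by
      exact_mod_cast prod_factorial_add_single m j
    rw [hfact, mul_comm _ (∏ i, _), mul_assoc, succ_mul_partSum_add_single, ← mul_assoc,
      mul_comm _ (θ + _), mul_assoc, ih m hm, ← Nat.cast_sum, hm, ascPochhammer_succ_right,
      Polynomial.eval_mul, Polynomial.eval_add, Polynomial.eval_X, Polynomial.eval_natCast]
    ring

end PartitionSum

theorem sum_theta_Mcoef_eq_pochhammer_general (q : ℕ) (n : Fin q → ℕ) (θ : ℝ) :
    ∑ᶠ A ∈ CPartSet n, θ ^ asize A * Mcoef n A =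
      (ascPochhammer ℝ (∑ j, n j)).eval θ := by
  rw [finsum_mem_eq_finite_toFinset_sum _ (CPartSet_finite n), ← factorial_mul_partSum,
    partSum, mul_sum]
  exact sum_congr rfl fun A _ => by rw [Mcoef_eq]; ring

/-- **A polynomial identity in `θ`:** for every `q ≥ 1` and `𝐧 ∈ ℕ^q_*`,
`∑_{A ⊨ 𝐧} θ^{‖A‖} M_𝐧(A) = (θ)_{|𝐧|}` for all `θ` (in particular all `θ > 0`). -/
theorem sum_theta_Mcoef_eq_pochhammer (q : ℕ) (hq : 1 ≤ q) (n : Fin q → ℕ) (hn : n ≠ 0)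
    (θ : ℝ) :
    ∑ᶠ A ∈ CPartSet n, θ ^ asize A * Mcoef n A =
      (ascPochhammer ℝ (∑ j, n j)).eval θ :=
  sum_theta_Mcoef_eq_pochhammer_general q n θ
end

section
/- Fix n,q ≥ 1, θ > 0, p ∈ Δ^{q−1}, and a set partition L = {L₁,…,L_r} of [q] with degeneracy map s_L : [q] → [r], s_L^{−1}(k) = L_k, inducing the linear map S_L : ℕ^q → ℕ^r, (S_L 𝐚)_k = ∑_{j ∈ L_k} a_j, and likewise S_L : Δ^{q−1} → Δ^{r−1}. Then the pushforward of Esf_{θ,p}^n under the map on colored partitions A ↦ (S_L)_* A := ∑_{𝐚 ∈ supp A} A(𝐚) 1_{S_L 𝐚} equals Esf_{θ, S_L p}^n on r-colored partitions of size n. -/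
open Finset Nat
open scoped Classical

/-- The polychromatic Ewens sampling formula
`Esf_{θ,p}^n(A) = (n!/(θ)_n) θ^{‖A‖} (p^{col A}/(col A)!) M_{col A}(A)`. -/
noncomputable def esf {q : ℕ} (θ : ℝ) (p : Fin q → ℝ) (n : ℕ)
    (A : (Fin q → ℕ) →₀ ℕ) : ℝ :=
  (n ! : ℝ) / (ascPochhammer ℝ n).eval θ * θ ^ asize A *
    ((∏ j, p j ^ colA A j) / ∏ j, ((colA A j)! : ℝ)) * Mcoef (colA A) A

/-- `S_L 𝐚 ∈ ℕ^r`: aggregation of a color count `𝐚 ∈ ℕ^q` along the fibers of the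
degeneracy map `s : [q] → [r]`. -/
def aggVec {q r : ℕ} (s : Fin q → Fin r) (a : Fin q → ℕ) : Fin r → ℕ :=
  fun k => ∑ j ∈ Finset.univ.filter fun j => s j = k, a j

/-- `(S_L)_* A`: the pushforward of a `q`-colored partition along the degeneracy map. -/
noncomputable def aggPart {q r : ℕ} (s : Fin q → Fin r) (A : (Fin q → ℕ) →₀ ℕ) :
    (Fin r → ℕ) →₀ ℕ :=
  ∑ a ∈ A.support, Finsupp.single (aggVec s a) (A a)

section AuxAgg

variable {q r : ℕ}

lemma aggVec_sum (s : Fin q → Fin r) (a : Fin q → ℕ) : ∑ k, aggVec s a k = ∑ j, a j := by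
  simpa [aggVec] using Finset.sum_fiberwise Finset.univ s a

lemma le_aggVec (s : Fin q → Fin r) (a : Fin q → ℕ) (j : Fin q) : a j ≤ aggVec s a (s j) :=
  Finset.single_le_sum (fun _ _ => Nat.zero_le _) (by simp)

/-- The (finite) fiber of the aggregation map over `b`. -/
noncomputable def fiber (s : Fin q → Fin r) (b : Fin r → ℕ) : Finset (Fin q → ℕ) :=
  (Fintype.piFinset fun _ => Finset.range (∑ k, b k + 1)).filter fun a => aggVec s a = b

lemma mem_fiber {s : Fin q → Fin r} {b : Fin r → ℕ} {a : Fin q → ℕ} :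
    a ∈ fiber s b ↔ aggVec s a = b := by
  constructor
  · exact fun h => (Finset.mem_filter.1 h).2
  · intro h
    refine Finset.mem_filter.2 ⟨Fintype.mem_piFinset.2 fun j => Finset.mem_range.2 ?_, h⟩
    have h1 : a j ≤ aggVec s a (s j) := le_aggVec s a j
    have h2 : b (s j) ≤ ∑ k, b k :=
      Finset.single_le_sum (fun _ _ => Nat.zero_le _) (Finset.mem_univ _)
    rw [h] at h1
    omega

lemma self_mem_fiber (s : Fin q → Fin r) (a : Fin q → ℕ) : a ∈ fiber s (aggVec s a) :=
  mem_fiber.2 rfl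

lemma sum_eq_of_mem_fiber {s : Fin q → Fin r} {b : Fin r → ℕ} {a : Fin q → ℕ}
    (h : a ∈ fiber s b) : ∑ j, a j = ∑ k, b k := by
  rw [← aggVec_sum s a, mem_fiber.1 h]

lemma aggPart_apply (s : Fin q → Fin r) (A : (Fin q → ℕ) →₀ ℕ) (b : Fin r → ℕ) :
    aggPart s A b = ∑ a ∈ fiber s b, A a := by
  rw [aggPart, Finset.sum_apply']
  simp only [Finsupp.single_apply]
  rw [← Finset.sum_filter]
  apply Finset.sum_subset
  · intro a ha
    rw [Finset.mem_filter] at ha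
    exact mem_fiber.2 ha.2
  · intro a ha hna
    by_contra h
    exact hna (Finset.mem_filter.2 ⟨Finsupp.mem_support_iff.2 h, mem_fiber.1 ha⟩)

lemma colA_aggPart (s : Fin q → Fin r) (A : (Fin q → ℕ) →₀ ℕ) :
    colA (aggPart s A) = aggVec s (colA A) := by
  funext k
  have h1 : colA (aggPart s A) k = (aggPart s A).sum fun b m => m * b k := by
    rw [colA, Finsupp.sum]
  rw [h1, aggPart, ← Finsupp.sum_finset_sum_index (by simp) (by intros; rw [add_mul])]
  have h2 : ∀ a ∈ A.support,
      (Finsupp.single (aggVec s a) (A a)).sum (fun b m => m * b k) = A a * aggVec s a k :=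
    fun a _ => Finsupp.sum_single_index (by simp)
  rw [Finset.sum_congr rfl h2]
  simp only [aggVec, colA]
  rw [Finset.sum_comm]
  exact Finset.sum_congr rfl fun a _ => Finset.mul_sum _ _ _

end AuxAgg

/-- The weight of a single part of color count `a`: `θ · p^𝐚 · (|𝐚| choose 𝐚) / |𝐚|`. -/
noncomputable def wgt {d : ℕ} (θ : ℝ) (p : Fin d → ℝ) (a : Fin d → ℕ) : ℝ :=
  θ * (Nat.multinomial Finset.univ a : ℝ) * (∏ j, p j ^ a j) / (∑ j, a j : ℝ)

/-- Product form of the Ewens sampling formula. -/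
lemma esf_eq_prod {d : ℕ} (θ : ℝ) (p : Fin d → ℝ) (n : ℕ) (A : (Fin d → ℕ) →₀ ℕ) :
    esf θ p n A = (n ! : ℝ) / (ascPochhammer ℝ n).eval θ *
      ∏ a ∈ A.support, (wgt θ p a ^ A a / ((A a)! : ℝ)) := by
  have h1 : θ ^ asize A = ∏ a ∈ A.support, θ ^ A a := by
    rw [asize, Finset.prod_pow_eq_pow_sum]
  have h2 : (∏ j, p j ^ colA A j) = ∏ a ∈ A.support, (∏ j, p j ^ a j) ^ A a := by
    calc ∏ j, p j ^ colA A j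
        = ∏ j, ∏ a ∈ A.support, (p j ^ a j) ^ A a := by
          refine Finset.prod_congr rfl fun j _ => ?_
          rw [show colA A j = ∑ a ∈ A.support, A a * a j from rfl,
            ← Finset.prod_pow_eq_pow_sum]
          exact Finset.prod_congr rfl fun a _ => pow_mul' (p j) (A a) (a j)
      _ = ∏ a ∈ A.support, (∏ j, p j ^ a j) ^ A a := by
          rw [Finset.prod_comm]
          exact Finset.prod_congr rfl fun a _ => Finset.prod_pow _ _ _
  have h3 : (∏ a ∈ A.support, (wgt θ p a ^ A a / ((A a)! : ℝ))) =
      (∏ a ∈ A.support, θ ^ A a) * (∏ a ∈ A.support, (∏ j, p j ^ a j) ^ A a) *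
      ∏ a ∈ A.support,
        ((Nat.multinomial Finset.univ a : ℝ) ^ A a / ((∑ j, a j : ℝ) ^ A a * (A a)!)) := by
    rw [← Finset.prod_mul_distrib, ← Finset.prod_mul_distrib]
    refine Finset.prod_congr rfl fun a _ => ?_
    rw [wgt, div_pow, mul_pow, mul_pow]
    ring
  have hY : (∏ j, ((colA A j)! : ℝ)) ≠ 0 := by positivity
  have key : ∀ c T X Y Z : ℝ, Y ≠ 0 → c * T * (X / Y) * (Y * Z) = c * (T * X * Z) := by
    intro c T X Y Z hy
    field_simp
  rw [esf, Mcoef, h1, h2, h3]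
  exact key _ _ _ _ _ hY

/-- Restriction of a color count to the `k`-th block. -/
def splitVec {q r : ℕ} (s : Fin q → Fin r) (a : Fin q → ℕ) (k : Fin r) : Fin q → ℕ :=
  fun j => if s j = k then a j else 0

section KeySum

variable {q r : ℕ}

lemma splitVec_mem {s : Fin q → Fin r} {b : Fin r → ℕ} {a : Fin q → ℕ}
    (ha : a ∈ fiber s b) (k : Fin r) :
    splitVec s a k ∈ Finset.piAntidiag (Finset.univ.filter fun j => s j = k) (b k) := by
  rw [Finset.mem_piAntidiag]
  constructor
  · rw [← mem_fiber.1 ha]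
    exact Finset.sum_congr rfl fun j hj => if_pos (Finset.mem_filter.1 hj).2
  · intro j hj
    simp only [splitVec, ne_eq, ite_eq_right_iff, not_forall] at hj
    exact Finset.mem_filter.2 ⟨Finset.mem_univ _, hj.1⟩

lemma prod_splitVec {s : Fin q → Fin r} {b : Fin r → ℕ} {a : Fin q → ℕ}
    (ha : a ∈ fiber s b) (f : Fin q → ℕ → ℝ) :
    ∏ k, ∏ j ∈ Finset.univ.filter fun j => s j = k, f j (splitVec s a k j) =
      ∏ j, f j (a j) := by
  rw [← Finset.prod_fiberwise Finset.univ s fun j => f j (a j)]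
  exact Finset.prod_congr rfl fun k _ => Finset.prod_congr rfl fun j hj => by
    rw [splitVec, if_pos (Finset.mem_filter.1 hj).2]

lemma mult_splitVec {s : Fin q → Fin r} {b : Fin r → ℕ} {a : Fin q → ℕ}
    (ha : a ∈ fiber s b) :
    (Nat.multinomial Finset.univ b : ℝ) *
      ∏ k, (Nat.multinomial (Finset.univ.filter fun j => s j = k) (splitVec s a k) : ℝ) =
      (Nat.multinomial Finset.univ a : ℝ) := by
  have hfa : (∏ j, ((a j)! : ℝ)) ≠ 0 := by positivity
  apply mul_right_cancel₀ hfa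
  have e1 : ∀ k : Fin r,
      (∏ j ∈ Finset.univ.filter fun j => s j = k, ((a j)! : ℝ)) *
        (Nat.multinomial (Finset.univ.filter fun j => s j = k) (splitVec s a k) : ℝ) =
        ((b k)! : ℝ) := by
    intro k
    have h := Nat.multinomial_spec (Finset.univ.filter fun j => s j = k) (splitVec s a k)
    have hs1 : ∑ j ∈ Finset.univ.filter fun j => s j = k, splitVec s a k j = b k :=
      (Finset.mem_piAntidiag.1 (splitVec_mem ha k)).1
    have hs2 : ∏ j ∈ Finset.univ.filter fun j => s j = k, ((splitVec s a k j)!) =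
        ∏ j ∈ Finset.univ.filter fun j => s j = k, ((a j)!) :=
      Finset.prod_congr rfl fun j hj => by rw [splitVec, if_pos (Finset.mem_filter.1 hj).2]
    rw [hs1, hs2] at h
    exact_mod_cast h
  have e2 : (∏ j, ((a j)! : ℝ)) * (Nat.multinomial Finset.univ a : ℝ) = ((∑ j, a j)! : ℝ) := by
    exact_mod_cast congrArg (Nat.cast (R := ℝ)) (Nat.multinomial_spec Finset.univ a)
  have e3 : (∏ k, ((b k)! : ℝ)) * (Nat.multinomial Finset.univ b : ℝ) = ((∑ k, b k)! : ℝ) := by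
    exact_mod_cast congrArg (Nat.cast (R := ℝ)) (Nat.multinomial_spec Finset.univ b)
  have e4 : ∏ k, (∏ j ∈ Finset.univ.filter fun j => s j = k, ((a j)! : ℝ)) *
      (Nat.multinomial (Finset.univ.filter fun j => s j = k) (splitVec s a k) : ℝ) =
      ∏ k, ((b k)! : ℝ) := Finset.prod_congr rfl fun k _ => e1 k
  rw [Finset.prod_mul_distrib] at e4
  have e5 : ∏ k, ∏ j ∈ Finset.univ.filter fun j => s j = k, ((a j)! : ℝ) =
      ∏ j, ((a j)! : ℝ) := Finset.prod_fiberwise Finset.univ s _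
  rw [e5] at e4
  calc (Nat.multinomial Finset.univ b : ℝ) *
        (∏ k, (Nat.multinomial (Finset.univ.filter fun j => s j = k) (splitVec s a k) : ℝ)) *
        ∏ j, ((a j)! : ℝ)
      = (Nat.multinomial Finset.univ b : ℝ) *
        ((∏ j, ((a j)! : ℝ)) *
          ∏ k, (Nat.multinomial (Finset.univ.filter fun j => s j = k) (splitVec s a k) : ℝ)) := by
        ring
    _ = (Nat.multinomial Finset.univ b : ℝ) * ∏ k, ((b k)! : ℝ) := by rw [e4]
    _ = ((∑ k, b k)! : ℝ) := by rw [mul_comm]; exact e3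
    _ = ((∑ j, a j)! : ℝ) := by rw [sum_eq_of_mem_fiber ha]
    _ = (Nat.multinomial Finset.univ a : ℝ) * ∏ j, ((a j)! : ℝ) := by rw [mul_comm]; exact e2.symm

/-- The key multinomial identity for aggregation of probabilities. -/
lemma key_sum (s : Fin q → Fin r) (p : Fin q → ℝ) (b : Fin r → ℕ) :
    ∑ a ∈ fiber s b, (Nat.multinomial Finset.univ a : ℝ) * ∏ j, p j ^ a j =
      (Nat.multinomial Finset.univ b : ℝ) *
        ∏ k, (∑ j ∈ Finset.univ.filter fun j => s j = k, p j) ^ b k := by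
  have hexp : ∀ k : Fin r, (∑ j ∈ Finset.univ.filter fun j => s j = k, p j) ^ b k
      = ∑ c ∈ Finset.piAntidiag (Finset.univ.filter fun j => s j = k) (b k),
          (Nat.multinomial (Finset.univ.filter fun j => s j = k) c : ℝ) *
          ∏ j ∈ Finset.univ.filter fun j => s j = k, p j ^ c j :=
    fun k => Finset.sum_pow_eq_sum_piAntidiag _ _ _
  rw [Finset.prod_congr rfl fun k _ => hexp k, Finset.prod_sum, Finset.mul_sum]
  refine Finset.sum_nbij' (fun a => fun k _ => splitVec s a k)
    (fun g => fun j => g (s j) (Finset.mem_univ _) j) ?_ ?_ ?_ ?_ ?_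
  · intro a ha
    exact Finset.mem_pi.2 fun k _ => splitVec_mem ha k
  · intro g hg
    rw [Finset.mem_pi] at hg
    refine mem_fiber.2 ?_
    funext k
    have : ∀ j ∈ Finset.univ.filter fun j => s j = k,
        g (s j) (Finset.mem_univ _) j = g k (Finset.mem_univ k) j := by
      intro j hj
      have h' := (Finset.mem_filter.1 hj).2
      subst h'
      rfl
    rw [aggVec, Finset.sum_congr rfl this]
    exact (Finset.mem_piAntidiag.1 (hg k (Finset.mem_univ k))).1
  · intro a ha
    funext j
    simp [splitVec]
  · intro g hg
    rw [Finset.mem_pi] at hg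
    funext k hk j
    by_cases h : s j = k
    · subst h
      simp [splitVec]
    · simp only [splitVec, if_neg h]
      by_contra hne
      have h0 : g k hk j ≠ 0 := fun hz => hne hz.symm
      have := (Finset.mem_piAntidiag.1 (hg k hk)).2 j h0
      exact h (Finset.mem_filter.1 this).2
  · intro a ha
    rw [Finset.prod_attach Finset.univ (fun k =>
      (Nat.multinomial (Finset.univ.filter fun j => s j = k) (splitVec s a k) : ℝ) *
        ∏ j ∈ Finset.univ.filter fun j => s j = k, p j ^ splitVec s a k j)]
    rw [Finset.prod_mul_distrib, ← mul_assoc, mult_splitVec ha, prod_splitVec ha fun j m => p j ^ m]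

end KeySum

section Glue

variable {q r : ℕ}

/-- Glue a family of refinements of the parts of `B` into a single `q`-colored partition. -/
noncomputable def glueF (s : Fin q → Fin r) (B : (Fin r → ℕ) →₀ ℕ)
    (g : (b : Fin r → ℕ) → b ∈ B.support → (Fin q → ℕ) → ℕ) : (Fin q → ℕ) →₀ ℕ :=
  Finsupp.onFinset (B.support.biUnion (fiber s))
    (fun a => if h : aggVec s a ∈ B.support then g (aggVec s a) h a else 0)
    (fun a ha => by
      rw [dite_ne_right_iff] at ha
      obtain ⟨h, -⟩ := ha
      exact Finset.mem_biUnion.2 ⟨_, h, self_mem_fiber s a⟩)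

lemma glueF_apply (s : Fin q → Fin r) (B : (Fin r → ℕ) →₀ ℕ)
    (g : (b : Fin r → ℕ) → b ∈ B.support → (Fin q → ℕ) → ℕ) (a : Fin q → ℕ) :
    glueF s B g a = if h : aggVec s a ∈ B.support then g (aggVec s a) h a else 0 := rfl

lemma glueF_apply_fiber (s : Fin q → Fin r) (B : (Fin r → ℕ) →₀ ℕ)
    (g : (b : Fin r → ℕ) → b ∈ B.support → (Fin q → ℕ) → ℕ)
    {b : Fin r → ℕ} (hb : b ∈ B.support) {a : Fin q → ℕ} (ha : a ∈ fiber s b) :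
    glueF s B g a = g b hb a := by
  have hab := mem_fiber.1 ha
  subst hab
  rw [glueF_apply, dif_pos hb]

lemma glueF_apply_nmem (s : Fin q → Fin r) (B : (Fin r → ℕ) →₀ ℕ)
    (g : (b : Fin r → ℕ) → b ∈ B.support → (Fin q → ℕ) → ℕ)
    {a : Fin q → ℕ} (ha : aggVec s a ∉ B.support) :
    glueF s B g a = 0 := by
  rw [glueF_apply, dif_neg ha]

lemma aggPart_glueF (s : Fin q → Fin r) (B : (Fin r → ℕ) →₀ ℕ)
    {g : (b : Fin r → ℕ) → b ∈ B.support → (Fin q → ℕ) → ℕ}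
    (hg : g ∈ B.support.pi fun b => Finset.piAntidiag (fiber s b) (B b)) :
    aggPart s (glueF s B g) = B := by
  rw [Finset.mem_pi] at hg
  ext b
  rw [aggPart_apply]
  by_cases hb : b ∈ B.support
  · rw [Finset.sum_congr rfl fun a ha => glueF_apply_fiber s B g hb ha]
    exact (Finset.mem_piAntidiag.1 (hg b hb)).1
  · rw [Finset.sum_eq_zero fun a ha => glueF_apply_nmem s B g (by rwa [mem_fiber.1 ha])]
    exact (Finsupp.notMem_support_iff.1 hb).symm

lemma glueF_injOn (s : Fin q → Fin r) (B : (Fin r → ℕ) →₀ ℕ)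
    {g g' : (b : Fin r → ℕ) → b ∈ B.support → (Fin q → ℕ) → ℕ}
    (hg : g ∈ B.support.pi fun b => Finset.piAntidiag (fiber s b) (B b))
    (hg' : g' ∈ B.support.pi fun b => Finset.piAntidiag (fiber s b) (B b))
    (h : glueF s B g = glueF s B g') : g = g' := by
  rw [Finset.mem_pi] at hg hg'
  funext b hb a
  by_cases ha : a ∈ fiber s b
  · rw [← glueF_apply_fiber s B g hb ha, ← glueF_apply_fiber s B g' hb ha, h]
  · have h1 : g b hb a = 0 := by
      by_contra h0
      exact ha ((Finset.mem_piAntidiag.1 (hg b hb)).2 a h0)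
    have h2 : g' b hb a = 0 := by
      by_contra h0
      exact ha ((Finset.mem_piAntidiag.1 (hg' b hb)).2 a h0)
    rw [h1, h2]

lemma glueF_surj (s : Fin q → Fin r) (B : (Fin r → ℕ) →₀ ℕ)
    (A : (Fin q → ℕ) →₀ ℕ) (hA : aggPart s A = B) :
    ∃ g ∈ B.support.pi fun b => Finset.piAntidiag (fiber s b) (B b), glueF s B g = A := by
  refine ⟨fun b _ => fun a => if a ∈ fiber s b then A a else 0, ?_, ?_⟩
  · refine Finset.mem_pi.2 fun b hb => Finset.mem_piAntidiag.2 ⟨?_, ?_⟩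
    · rw [Finset.sum_congr rfl fun a ha => if_pos ha, ← aggPart_apply, hA]
    · intro a ha
      by_contra h
      exact ha (if_neg h)
  · ext a
    rw [glueF_apply]
    by_cases h : aggVec s a ∈ B.support
    · rw [dif_pos h, if_pos (self_mem_fiber s a)]
    · rw [dif_neg h]
      by_contra hne
      have h0 : A a ≠ 0 := fun hz => hne hz.symm
      apply h
      rw [Finsupp.mem_support_iff, ← hA, aggPart_apply]
      intro hzero
      have hle : A a ≤ ∑ x ∈ fiber s (aggVec s a), A x :=
        Finset.single_le_sum (fun _ _ => Nat.zero_le _) (self_mem_fiber s a)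
      omega

lemma A_zero_of_aggPart (s : Fin q → Fin r) (A : (Fin q → ℕ) →₀ ℕ)
    (B : (Fin r → ℕ) →₀ ℕ) (hA : aggPart s A = B) (hB0 : B 0 = 0) : A 0 = 0 := by
  have h0 : (0 : Fin q → ℕ) ∈ fiber s 0 := by
    refine mem_fiber.2 ?_
    funext k
    simp [aggVec]
  have hle : A 0 ≤ ∑ a ∈ fiber s 0, A a :=
    Finset.single_le_sum (fun _ _ => Nat.zero_le _) h0
  rw [← aggPart_apply, hA, hB0] at hle
  omega

lemma sum_colA_of_aggPart (s : Fin q → Fin r) (A : (Fin q → ℕ) →₀ ℕ)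
    (B : (Fin r → ℕ) →₀ ℕ) (hA : aggPart s A = B) :
    ∑ j, colA A j = ∑ k, colA B k := by
  rw [← hA, colA_aggPart, aggVec_sum]

end Glue

section Final

variable {q r : ℕ}

lemma wgt_agg (s : Fin q → Fin r) (θ : ℝ) (p : Fin q → ℝ) (b : Fin r → ℕ) :
    ∑ a ∈ fiber s b, wgt θ p a =
      wgt θ (fun k => ∑ j ∈ Finset.univ.filter fun j => s j = k, p j) b := by
  have h1 : ∀ a ∈ fiber s b, wgt θ p a =
      θ * ((Nat.multinomial Finset.univ a : ℝ) * ∏ j, p j ^ a j) / (∑ k, b k : ℝ) := by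
    intro a ha
    rw [wgt, mul_assoc]
    congr 1
    have := sum_eq_of_mem_fiber ha
    exact_mod_cast congrArg (Nat.cast (R := ℝ)) this
  rw [Finset.sum_congr rfl h1, ← Finset.sum_div, ← Finset.mul_sum, key_sum s p b, wgt, mul_assoc]

lemma pow_expand {ι : Type*} [DecidableEq ι] (t : Finset ι) (x : ι → ℝ) (N : ℕ) :
    (∑ a ∈ t, x a) ^ N / (N ! : ℝ) =
      ∑ f ∈ Finset.piAntidiag t N, ∏ a ∈ t, (x a ^ f a / ((f a)! : ℝ)) := by
  rw [Finset.sum_pow_eq_sum_piAntidiag, Finset.sum_div]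
  refine Finset.sum_congr rfl fun f hf => ?_
  obtain ⟨hsum, -⟩ := Finset.mem_piAntidiag.1 hf
  have hspec : ((Nat.multinomial t f : ℝ) * ∏ a ∈ t, ((f a)! : ℝ)) = (N ! : ℝ) := by
    rw [mul_comm]
    rw [← hsum]
    exact_mod_cast congrArg (Nat.cast (R := ℝ)) (Nat.multinomial_spec t f)
  have hm : (Nat.multinomial t f : ℝ) ≠ 0 := by
    have := Nat.multinomial_pos t f
    positivity
  rw [← hspec, mul_div_mul_left _ _ hm, Finset.prod_div_distrib]

lemma prod_glueF (s : Fin q → Fin r) (B : (Fin r → ℕ) →₀ ℕ)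
    {g : (b : Fin r → ℕ) → b ∈ B.support → (Fin q → ℕ) → ℕ}
    (hg : g ∈ B.support.pi fun b => Finset.piAntidiag (fiber s b) (B b))
    (F : (Fin q → ℕ) → ℕ → ℝ) (hF : ∀ a, F a 0 = 1) :
    ∏ a ∈ (glueF s B g).support, F a (glueF s B g a) =
      ∏ b ∈ B.support.attach, ∏ a ∈ fiber s b.1, F a (g b.1 b.2 a) := by
  have hdisj : (B.support : Set (Fin r → ℕ)).PairwiseDisjoint (fiber s) := by
    intro b _ b' _ hbb'
    simp only [Function.onFun]
    rw [Finset.disjoint_left]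
    intro a ha ha'
    exact hbb' ((mem_fiber.1 ha).symm.trans (mem_fiber.1 ha'))
  have hsub : (glueF s B g).support ⊆ B.support.biUnion (fiber s) :=
    Finsupp.support_onFinset_subset
  rw [Finset.prod_subset hsub fun a _ h => by
    rw [Finsupp.notMem_support_iff.1 h]; exact hF a]
  rw [Finset.prod_biUnion hdisj, ← Finset.prod_attach B.support
    (fun b => ∏ a ∈ fiber s b, F a (glueF s B g a))]
  exact Finset.prod_congr rfl fun b _ => Finset.prod_congr rfl fun a ha => by
    rw [glueF_apply_fiber s B g b.2 ha]

end Final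

/-- **Aggregation of colors.** For a set partition `L` of `[q]` into `r` classes with
degeneracy map `s_L : [q] → [r]` (a surjection, whose fibers are the classes), the
pushforward of `Esf_{θ,p}^n` under `A ↦ (S_L)_* A` equals `Esf_{θ, S_L p}^n` on
`r`-colored partitions of size `n`. -/
theorem esf_aggregation (n q r : ℕ) (hn : 1 ≤ n) (hq : 1 ≤ q) (hr : 1 ≤ r)
    (s : Fin q → Fin r) (hs : Function.Surjective s)
    (θ : ℝ) (hθ : 0 < θ) (p : Fin q → ℝ) (hp : ∀ j, 0 ≤ p j) (hp1 : ∑ j, p j = 1)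
    (B : (Fin r → ℕ) →₀ ℕ) (hB0 : B 0 = 0) (hBn : ∑ k, colA B k = n) :
    ∑ᶠ A ∈ {A : (Fin q → ℕ) →₀ ℕ | A 0 = 0 ∧ (∑ j, colA A j) = n ∧ aggPart s A = B},
      esf θ p n A =
      esf θ (fun k => ∑ j ∈ Finset.univ.filter fun j => s j = k, p j) n B := by
  classical
  set P := B.support.pi fun b => Finset.piAntidiag (fiber s b) (B b) with hP
  have hset : {A : (Fin q → ℕ) →₀ ℕ | A 0 = 0 ∧ (∑ j, colA A j) = n ∧ aggPart s A = B}
      = ↑(P.image (glueF s B)) := by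
    ext A
    simp only [Set.mem_setOf_eq, Finset.coe_image, Set.mem_image, Finset.mem_coe]
    constructor
    · rintro ⟨-, -, hA⟩
      exact glueF_surj s B A hA
    · rintro ⟨g, hgP, rfl⟩
      have hA := aggPart_glueF s B hgP
      exact ⟨A_zero_of_aggPart s _ B hA hB0,
        by rw [sum_colA_of_aggPart s _ B hA, hBn], hA⟩
  rw [hset, finsum_mem_coe_finset,
    Finset.sum_image fun g hg g' hg' h => glueF_injOn s B hg hg' h]
  have hC : ∀ g ∈ P, esf θ p n (glueF s B g) =
      (n ! : ℝ) / (ascPochhammer ℝ n).eval θ *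
        ∏ b ∈ B.support.attach, ∏ a ∈ fiber s b.1,
          (wgt θ p a ^ g b.1 b.2 a / ((g b.1 b.2 a)! : ℝ)) := by
    intro g hg
    exact (esf_eq_prod θ p n _).trans
      (congrArg (fun z => (n ! : ℝ) / (ascPochhammer ℝ n).eval θ * z)
        (prod_glueF s B hg (fun a m => wgt θ p a ^ m / (m ! : ℝ)) (fun a => by simp)))
  rw [Finset.sum_congr rfl hC, ← Finset.mul_sum, esf_eq_prod θ _ n B]
  congr 1
  calc ∑ g ∈ P, ∏ b ∈ B.support.attach, ∏ a ∈ fiber s b.1,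
        (wgt θ p a ^ g b.1 b.2 a / ((g b.1 b.2 a)! : ℝ))
      = ∏ b ∈ B.support, ∑ f ∈ Finset.piAntidiag (fiber s b) (B b),
          ∏ a ∈ fiber s b, (wgt θ p a ^ f a / ((f a)! : ℝ)) :=
        (Finset.prod_sum B.support (fun b => Finset.piAntidiag (fiber s b) (B b))
          (fun b c => ∏ a ∈ fiber s b, (wgt θ p a ^ c a / ((c a)! : ℝ)))).symm
    _ = ∏ b ∈ B.support,
          (wgt θ (fun k => ∑ j ∈ Finset.univ.filter fun j => s j = k, p j) b ^ B b
            / ((B b)! : ℝ)) :=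
        Finset.prod_congr rfl fun b _ => by rw [← wgt_agg s θ p b, pow_expand]
end
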